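/- If 0 < δ and ε = δ/2, then every (ε,δ)-Delone set in ℝ is of the form a + δ·ℤ for some a ∈ ℝ; in particular it is periodic with period δ. -/

import Mathlib

def IsSeparated' (δ : ℝ) (S : Set ℝ) : Prop :=
  ∀ x ∈ S, ∀ y ∈ S, x ≠ y → δ ≤ dist x y

def IsDelone (ε δ : ℝ) (S : Set ℝ) : Prop :=
  (∀ x : ℝ, ∃ y ∈ S, dist x y ≤ ε) ∧ IsSeparated' δ S

/-! A `δ`-separated set with covering radius `δ / 2` is rigid. Starting from `x ∈ S`, density puts
a point `y` of `S` within `δ / 2` of `x + δ`, and separation forces `y ≥ x + δ`. No point of `S`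
fits strictly between `x` and `y`, since they are less than `2δ` apart; but a gap between two
points of a `δ / 2`-dense set has length at most `δ`. Hence `y = x + δ`, and by reflection also
`x - δ ∈ S`, so `S` is `δ`-periodic, and by separation each period `[a, a + δ)` holds exactly one
point of `S`. -/

open scoped Pointwise

variable {ε δ : ℝ} {S : Set ℝ} {x y : ℝ}

lemma sub_le_two_mul_of_forall_notMem_Ioo (hdense : ∀ x : ℝ, ∃ y ∈ S, dist x y ≤ ε)
    (hgap : ∀ z ∈ S, z ∉ Set.Ioo x y) : y - x ≤ 2 * ε := by
  obtain ⟨s, hs, hms⟩ := hdense ((x + y) / 2)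
  have hout : s ≤ x ∨ y ≤ s := by
    by_contra! h
    exact hgap s hs ⟨h.1, h.2⟩
  rw [Real.dist_eq, abs_le] at hms
  rcases hout with h | h <;> linarith [hms.1, hms.2]

namespace IsSeparated'

lemma eq_of_dist_lt (hS : IsSeparated' δ S) (hx : x ∈ S) (hy : y ∈ S) (hxy : dist x y < δ) :
    x = y := by
  by_contra hne
  exact (hS x hx y hy hne).not_gt hxy

lemma forall_notMem_Ioo (hS : IsSeparated' δ S) (hx : x ∈ S) (hy : y ∈ S)
    (hxy : y - x < 2 * δ) : ∀ z ∈ S, z ∉ Set.Ioo x y := by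
  rintro z hz ⟨hxz, hzy⟩
  have hleft := hS z hz x hx hxz.ne'
  have hright := hS y hy z hz hzy.ne'
  rw [Real.dist_eq, abs_of_pos (by linarith)] at hleft hright
  linarith

end IsSeparated'

namespace IsDelone

lemma neg (hS : IsDelone ε δ S) : IsDelone ε δ (-S) := by
  refine ⟨fun x ↦ ?_, fun x hx y hy hxy ↦ ?_⟩
  · obtain ⟨y, hy, hxy⟩ := hS.1 (-x)
    exact ⟨-y, by simpa using hy, by rwa [← dist_neg_neg, neg_neg]⟩
  · rw [← dist_neg_neg]
    exact hS.2 (-x) hx (-y) hy (neg_injective.ne hxy)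

lemma add_mem (hδ : 0 < δ) (hS : IsDelone (δ / 2) δ S) (hx : x ∈ S) : x + δ ∈ S := by
  obtain ⟨y, hy, hxy⟩ := hS.1 (x + δ)
  rw [Real.dist_eq, abs_le] at hxy
  have hsep : δ ≤ y - x := by
    have := hS.2 x hx y hy (show x < y by linarith).ne
    rwa [Real.dist_eq, abs_of_neg (by linarith), neg_sub] at this
  have hgap : y - x ≤ 2 * (δ / 2) :=
    sub_le_two_mul_of_forall_notMem_Ioo hS.1 (hS.2.forall_notMem_Ioo hx hy (by linarith))
  rwa [show x + δ = y by linarith]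

lemma sub_mem (hδ : 0 < δ) (hS : IsDelone (δ / 2) δ S) (hx : x ∈ S) : x - δ ∈ S := by
  have h := hS.neg.add_mem hδ (x := -x) (by simpa using hx)
  rwa [Set.mem_neg, neg_add, neg_neg, ← sub_eq_add_neg] at h

lemma periodic (hδ : 0 < δ) (hS : IsDelone (δ / 2) δ S) : Function.Periodic (· ∈ S) δ :=
  fun x ↦ propext ⟨fun h ↦ by simpa using hS.sub_mem hδ h, hS.add_mem hδ⟩

end IsDelone

/-- Every (δ/2, δ)-Delone set in ℝ is of the form a + δ·ℤ, hence periodic with period δ. -/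
theorem delone_half_periodic (δ : ℝ) (hδ : 0 < δ) (S : Set ℝ)
    (hS : IsDelone (δ / 2) δ S) :
    ∃ a : ℝ, S = {x : ℝ | ∃ k : ℤ, x = a + δ * k} := by
  obtain ⟨a, ha, -⟩ := hS.1 0
  have hper := hS.periodic hδ
  refine ⟨a, Set.ext fun s ↦ ⟨fun hs ↦ ?_, ?_⟩⟩
  · set n := toIcoDiv hδ a s
    have hIco := sub_toIcoDiv_zsmul_mem_Ico hδ a s
    have hmem : s - n • δ ∈ S := (hper.sub_zsmul_eq n).mpr hs
    have heq : a = s - n • δ := hS.2.eq_of_dist_lt ha hmem <| by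
      rw [Real.dist_eq, abs_sub_comm, abs_of_nonneg (by linarith [hIco.1])]
      linarith [hIco.2]
    exact ⟨n, by rw [heq, zsmul_eq_mul]; ring⟩
  · rintro ⟨k, rfl⟩
    rw [mul_comm]
    exact (hper.int_mul k a).mpr ha
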